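/- For distinct points x₁,…,x_m ∈ ℝ^d and σ > 0, the m×m Gaussian kernel matrix K with entries K_{ij} = exp(−‖xᵢ−xⱼ‖²/σ) is invertible (has full rank). -/

import Mathlib

/-!
Completing the square (Apollonius' theorem) gives
`exp (-2b‖t - u‖²) * exp (-2b‖t - v‖²) = exp (-4b‖t - (u + v)/2‖²) * exp (-b‖u - v‖²)`,
so with `b = 1/σ` the kernel matrix is a positive multiple of the `L²` Gram matrix of the
Gaussians `t ↦ exp (-2b‖t - xᵢ‖²)`. Up to the nowhere vanishing factor `exp (-2b‖t‖²)` and the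
constants `exp (-2b‖xᵢ‖²)`, these Gaussians are the characters `t ↦ exp ⟪4b xᵢ, t⟫` of the
additive group, which are distinct because the `xᵢ` are, hence linearly independent (Dedekind).
The Gram matrix of linearly independent vectors is positive definite.
-/

open MeasureTheory Real Matrix
open scoped RealInnerProductSpace ENNReal

section LinearIndependence

variable {ι E : Type*} [NormedAddCommGroup E] [InnerProductSpace ℝ E] {x : ι → E}

theorem linearIndependent_exp_inner (hx : Function.Injective x) :
    LinearIndependent ℝ (fun i (t : E) => exp ⟪x i, t⟫) := by
  let φ : ι → Multiplicative E →* ℝ := fun i =>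
    { toFun := fun t => exp ⟪x i, t.toAdd⟫
      map_one' := by simp
      map_mul' := fun s t => by simp [inner_add_right, exp_add] }
  have hφ : Function.Injective φ := by
    intro i j h
    have hij : ⟪x i, x i - x j⟫ = ⟪x j, x i - x j⟫ :=
      exp_injective (DFunLike.congr_fun h (Multiplicative.ofAdd (x i - x j)))
    rw [← sub_eq_zero, ← inner_sub_left, inner_self_eq_zero, sub_eq_zero] at hij
    exact hx hij
  exact (linearIndependent_monoidHom (Multiplicative E) ℝ).comp φ hφ

theorem linearIndependent_exp_neg_mul_norm_sub_sq {b : ℝ} (hb : b ≠ 0)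
    (hx : Function.Injective x) :
    LinearIndependent ℝ (fun i (t : E) => exp (-b * ‖t - x i‖ ^ 2)) := by
  let gauss : E → ℝ := fun t => exp (-b * ‖t‖ ^ 2)
  let weight : ι → ℝˣ := fun i => Units.mk0 _ (exp_ne_zero (-b * ‖x i‖ ^ 2))
  have hchar : LinearIndependent ℝ (fun i (t : E) => exp ⟪(2 * b) • x i, t⟫) :=
    linearIndependent_exp_inner ((smul_right_injective E (mul_ne_zero two_ne_zero hb)).comp hx)
  have hker : LinearMap.ker (LinearMap.mulLeft ℝ gauss) = ⊥ :=
    LinearMap.ker_eq_bot_of_injective fun g h hgh => funext fun t =>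
      mul_left_cancel₀ (exp_ne_zero _) (congr_fun hgh t)
  have hsplit : (fun i (t : E) => exp (-b * ‖t - x i‖ ^ 2)) =
      weight • (LinearMap.mulLeft ℝ gauss ∘ fun i t => exp ⟪(2 * b) • x i, t⟫) := by
    ext i t
    simp only [weight, gauss, Pi.smul_apply', Pi.smul_apply, Function.comp_apply,
      LinearMap.mulLeft_apply, Pi.mul_apply, Units.smul_mk0, smul_eq_mul, ← exp_add]
    rw [norm_sub_sq_real, real_inner_smul_left, real_inner_comm]
    ring_nf
  rw [hsplit]
  exact (hchar.map' _ hker).units_smul weight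

end LinearIndependence

section Gram

variable {α ι : Type*} [MeasurableSpace α] [TopologicalSpace α] {μ : Measure α}
  [μ.IsOpenPosMeasure] [Fintype ι] {f : ι → α → ℝ}

theorem MeasureTheory.MemLp.linearIndependent_toLp {p : ℝ≥0∞}
    (hcont : ∀ i, Continuous (f i)) (hf : ∀ i, MemLp (f i) p μ) (hli : LinearIndependent ℝ f) :
    LinearIndependent ℝ fun i => (hf i).toLp (f i) := by
  classical
  rw [Fintype.linearIndependent_iff] at hli ⊢
  intro c hc
  have hcomb : Continuous (∑ i, c i • f i) := by
    rw [Finset.sum_fn]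
    exact continuous_finsetSum _ fun i _ => (hcont i).const_smul (c i)
  refine hli c ((hcomb.ae_eq_iff_eq μ continuous_zero).mp ?_)
  have hsum : ∀ s : Finset ι,
      ⇑(∑ i ∈ s, c i • (hf i).toLp (f i)) =ᵐ[μ] ∑ i ∈ s, c i • f i := by
    intro s
    induction s using Finset.induction_on with
    | empty => simpa using Lp.coeFn_zero ℝ p μ
    | insert i s hi ih =>
      rw [Finset.sum_insert hi, Finset.sum_insert hi]
      filter_upwards [Lp.coeFn_add (c i • (hf i).toLp (f i)) (∑ j ∈ s, c j • (hf j).toLp (f j)),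
        Lp.coeFn_smul (c i) ((hf i).toLp (f i)), (hf i).coeFn_toLp, ih] with t h₁ h₂ h₃ h₄
      rw [h₁, Pi.add_apply, h₂, Pi.smul_apply, h₃, h₄]
      rfl
  filter_upwards [hsum Finset.univ, Lp.coeFn_zero ℝ p μ] with t h₁ h₂
  rw [← h₁, hc, h₂]

theorem Matrix.posDef_integral_mul_of_linearIndependent (hcont : ∀ i, Continuous (f i))
    (hf : ∀ i, MemLp (f i) 2 μ) (hli : LinearIndependent ℝ f) :
    (of fun i j => ∫ t, f i t * f j t ∂μ).PosDef := by
  have hgram : (of fun i j => ∫ t, f i t * f j t ∂μ) = gram ℝ fun i => (hf i).toLp (f i) := by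
    ext i j
    rw [gram_apply, L2.inner_def, of_apply]
    refine integral_congr_ae ?_
    filter_upwards [(hf i).coeFn_toLp, (hf j).coeFn_toLp] with t hi hj
    simp [hi, hj, mul_comm]
  rw [hgram]
  exact posDef_gram_of_linearIndependent (MemLp.linearIndependent_toLp hcont hf hli)

end Gram

section Gaussian

variable {E : Type*} [NormedAddCommGroup E] [InnerProductSpace ℝ E] [FiniteDimensional ℝ E]
  [MeasurableSpace E] [BorelSpace E]

theorem integral_exp_neg_mul_norm_sub_sq_mul {b : ℝ} (hb : 0 < b) (u v : E) :
    ∫ t, exp (-(2 * b) * ‖t - u‖ ^ 2) * exp (-(2 * b) * ‖t - v‖ ^ 2) =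
      (π / (4 * b)) ^ (Module.finrank ℝ E / 2 : ℝ) * exp (-b * ‖u - v‖ ^ 2) := by
  have hsplit : ∀ t, exp (-(2 * b) * ‖t - u‖ ^ 2) * exp (-(2 * b) * ‖t - v‖ ^ 2) =
      exp (-(4 * b) * ‖t - midpoint ℝ u v‖ ^ 2) * exp (-b * ‖u - v‖ ^ 2) := by
    intro t
    have hapollonius :=
      EuclideanGeometry.dist_sq_add_dist_sq_eq_two_mul_dist_midpoint_sq_add_half_dist_sq t u v
    simp only [dist_eq_norm] at hapollonius
    rw [← exp_add, ← exp_add]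
    congr 1
    linear_combination (-(2 * b)) * hapollonius
  simp_rw [hsplit]
  rw [integral_mul_const, integral_sub_right_eq_self (fun t => exp (-(4 * b) * ‖t‖ ^ 2)),
    GaussianFourier.integral_rexp_neg_mul_sq_norm (by positivity)]

theorem memLp_two_exp_neg_mul_norm_sub_sq {b : ℝ} (hb : 0 < b) (u : E) :
    MemLp (fun t => exp (-(2 * b) * ‖t - u‖ ^ 2)) 2 := by
  refine (memLp_two_iff_integrable_sq (by fun_prop)).mpr (.of_integral_ne_zero ?_)
  simp_rw [sq (exp _), integral_exp_neg_mul_norm_sub_sq_mul hb u u, sub_self, norm_zero]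
  positivity

end Gaussian

/-- For pairwise distinct points `x₁,…,x_m ∈ ℝ^d` and `σ > 0`, the Gaussian kernel
matrix `K_{ij} = exp(−‖xᵢ−xⱼ‖²/σ)` has full rank (is invertible). -/
theorem gaussian_kernel_matrix_invertible {d m : ℕ} (σ : ℝ) (hσ : 0 < σ)
    (x : Fin m → EuclideanSpace ℝ (Fin d)) (hx : Function.Injective x) :
    IsUnit (Matrix.of fun i j : Fin m => Real.exp (-(1 / σ) * ‖x i - x j‖ ^ 2)) := by
  set b := 1 / σ
  have hb : 0 < b := by positivity
  set C := (π / (4 * b)) ^ (Module.finrank ℝ (EuclideanSpace ℝ (Fin d)) / 2 : ℝ)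
  have hC : 0 < C := by positivity
  have hgram :
      (of fun i j => ∫ t, exp (-(2 * b) * ‖t - x i‖ ^ 2) * exp (-(2 * b) * ‖t - x j‖ ^ 2)) =
        C • of fun i j => exp (-b * ‖x i - x j‖ ^ 2) := by
    ext i j
    rw [of_apply, integral_exp_neg_mul_norm_sub_sq_mul hb, Matrix.smul_apply, of_apply,
      smul_eq_mul]
  have hpos := posDef_integral_mul_of_linearIndependent (μ := volume) (fun i => by fun_prop)
    (fun i => memLp_two_exp_neg_mul_norm_sub_sq hb (x i))
    (linearIndependent_exp_neg_mul_norm_sub_sq (by positivity) hx)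
  rw [hgram] at hpos
  have hunit := (hpos.smul (inv_pos.mpr hC)).isUnit
  rwa [smul_smul, inv_mul_cancel₀ hC.ne', one_smul] at hunit
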